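/- arXiv:1308.3074 — 3 statements merged into one kernel-verified Lean document; each statement's English description precedes it below -/
import Mathlib

section
/- Let G = (V,E) be an indecomposable graph and X ⊆ V with |X| ≥ 4, |V \ X| ≥ 2, and G[X] indecomposable. Then there exist distinct x, y ∈ V \ X such that G[X ∪ {x,y}] is indecomposable. -/
open SimpleGraph

variable {V : Type*}

/-- `I` is an interval (module) of `G`: every vertex outside `I` is adjacent
either to all or to none of the vertices of `I`. -/
def IsInterval (G : SimpleGraph V) (I : Set V) : Prop :=
  ∀ x ∉ I, ∀ a ∈ I, ∀ b ∈ I, (G.Adj a x ↔ G.Adj b x)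

/-- A graph is indecomposable if its only intervals are trivial. -/
def Indecomposable (G : SimpleGraph V) : Prop :=
  ∀ I : Set V, IsInterval G I → I = ∅ ∨ I = Set.univ ∨ ∃ x, I = {x}

def Decomposable (G : SimpleGraph V) : Prop := ¬ Indecomposable G

/-- The path graph on `Fin n`; the vertex `(i : Fin n)` represents the
paper's vertex `i+1`, so edges join consecutive indices. -/
def P (n : ℕ) : SimpleGraph (Fin n) :=
  SimpleGraph.fromRel (fun i j => (i : ℕ) + 1 = (j : ℕ))

/-- The graph `Q_n` on `Fin n` (index `i` represents the paper's vertex `i+1`):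
the path on indices `0..n-3` together with the hub index `n-2` (vertex `n-1`)
joined to every index except `n-2` and `n-3`. -/
def Q (n : ℕ) : SimpleGraph (Fin n) :=
  SimpleGraph.fromRel (fun i j =>
    ((i : ℕ) + 1 = (j : ℕ) ∧ (j : ℕ) ≤ n - 3) ∨
    ((i : ℕ) = n - 2 ∧ (j : ℕ) ≠ n - 2 ∧ (j : ℕ) ≠ n - 3))

/-- `Ext(X)`. -/
def ExtSet (G : SimpleGraph V) (X : Set V) : Set V :=
  {v | v ∉ X ∧ Indecomposable (G.induce (X ∪ {v}))}

/-- `⟨X⟩`. -/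
def AngleSet (G : SimpleGraph V) (X : Set V) : Set V :=
  {v | v ∉ X ∧ ((∀ x ∈ X, G.Adj v x) ∨ (∀ x ∈ X, ¬ G.Adj v x))}

/-- `X(u)`: vertices `v ∉ X` such that `{u,v}` is an interval of `G[X ∪ {v}]`. -/
def XSet (G : SimpleGraph V) (X : Set V) (u : V) : Set V :=
  {v | v ∉ X ∧ IsInterval (G.induce (X ∪ {v})) (Subtype.val ⁻¹' {u, v})}

/-- `G` is `{a,b}`-minimal. -/
def IsMinimal (G : SimpleGraph V) (a b : V) : Prop :=
  Indecomposable G ∧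
    ∀ X : Set V, X ⊂ Set.univ → a ∈ X → b ∈ X → 3 ≤ X.ncard →
      Decomposable (G.induce X)

/-!
A vertex `v ∉ X` lies in `Ext(X)`, in `⟨X⟩` (when `X` is an interval of `G[X ∪ {v}]`), or in
`X(u)` for some `u ∈ X` (when `{u, v}` is one), and for `|X| ≥ 3` these sets are disjoint. Suppose
no two outside vertices extend `X`. Analysing a nontrivial interval of `G[X ∪ {v, w}]` for every
pair shows in turn that `{u} ∪ X(u)` is an interval of `G`, so every `X(u)` is empty; that
`X ∪ Ext(X)` is an interval of `G`, so `⟨X⟩` is empty; and finally that `V \ X` is an interval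
of `G`, which is impossible as it has at least two vertices.
-/

variable {G : SimpleGraph V} {S X I : Set V}

/-- `I` is an interval of `G[S]`, phrased with vertices of `V` instead of `S`. -/
def IsIntervalIn (G : SimpleGraph V) (S I : Set V) : Prop :=
  ∀ z ∈ S, z ∉ I → ∀ a ∈ I, ∀ b ∈ I, (G.Adj a z ↔ G.Adj b z)

lemma isInterval_induce_iff (hIS : I ⊆ S) :
    IsInterval (G.induce S) (Subtype.val ⁻¹' I) ↔ IsIntervalIn G S I :=
  ⟨fun h z hz hzI a ha b hb => h ⟨z, hz⟩ hzI ⟨a, hIS ha⟩ ha ⟨b, hIS hb⟩ hb,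
    fun h z hz a ha b hb => h z z.2 hz a ha b hb⟩

lemma indecomposable_induce_iff :
    Indecomposable (G.induce S) ↔
      ∀ I ⊆ S, IsIntervalIn G S I → I.Subsingleton ∨ I = S := by
  constructor
  · intro h I hIS hI
    have himage : Subtype.val '' (Subtype.val ⁻¹' I : Set S) = I := by
      rw [Subtype.image_preimage_coe, Set.inter_eq_right.2 hIS]
    rcases h _ ((isInterval_induce_iff hIS).2 hI) with hJ | hJ | ⟨x, hJ⟩ <;>
      rw [hJ] at himage <;> simp [← himage]
  · intro h J hJ
    have hIS : Subtype.val '' J ⊆ S := Subtype.coe_image_subset S J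
    have hpre : Subtype.val ⁻¹' (Subtype.val '' J) = J :=
      Set.preimage_image_eq J Subtype.val_injective
    rcases h _ hIS ((isInterval_induce_iff hIS).1 (by rwa [hpre])) with hs | hs
    · have hJs : J.Subsingleton := hpre ▸ hs.preimage Subtype.val_injective
      exact hJs.eq_empty_or_singleton.imp_right Or.inr
    · right; left
      rw [← hpre, hs, Subtype.coe_preimage_self]

lemma Indecomposable.subsingleton_or_eq_of_isIntervalIn (h : Indecomposable (G.induce S))
    (hIS : I ⊆ S) (hI : IsIntervalIn G S I) : I.Subsingleton ∨ I = S :=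
  indecomposable_induce_iff.1 h I hIS hI

lemma exists_isIntervalIn_of_not_indecomposable (h : ¬ Indecomposable (G.induce S)) :
    ∃ I ⊆ S, IsIntervalIn G S I ∧ I.Nontrivial ∧ I ≠ S := by
  simpa [indecomposable_induce_iff, Set.not_subsingleton_iff] using h

lemma Indecomposable.subsingleton_or_eq_univ (h : Indecomposable G) (hI : IsInterval G I) :
    I.Subsingleton ∨ I = Set.univ := by
  rcases h I hI with rfl | rfl | ⟨x, rfl⟩ <;> simp

lemma IsIntervalIn.inter {T : Set V} (hI : IsIntervalIn G S I) (hTS : T ⊆ S) :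
    IsIntervalIn G T (I ∩ T) :=
  fun z hz hzI a ha b hb => hI z (hTS hz) (fun h => hzI ⟨h, hz⟩) a ha.1 b hb.1

lemma isIntervalIn_pair_iff {u v : V} :
    IsIntervalIn G S {u, v} ↔ ∀ z ∈ S, z ≠ u → z ≠ v → (G.Adj u z ↔ G.Adj v z) := by
  simp only [IsIntervalIn, Set.mem_insert_iff, Set.mem_singleton_iff, not_or]
  constructor
  · exact fun h z hz hzu hzv => h z hz ⟨hzu, hzv⟩ u (Or.inl rfl) v (Or.inr rfl)
  · rintro h z hz ⟨hzu, hzv⟩ a (rfl | rfl) b (rfl | rfl)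
    exacts [Iff.rfl, h z hz hzu hzv, (h z hz hzu hzv).symm, Iff.rfl]

/-- The trace of an interval of `G[S]` on `X ⊆ S` is an interval of `G[X]`, hence trivial. -/
lemma IsIntervalIn.inter_trichotomy (hind : Indecomposable (G.induce X)) (hXS : X ⊆ S)
    (hI : IsIntervalIn G S I) :
    (∀ x ∈ X, x ∉ I) ∨ (∃ u ∈ X, ∀ x ∈ X, x ∈ I ↔ x = u) ∨ X ⊆ I := by
  rcases hind.subsingleton_or_eq_of_isIntervalIn Set.inter_subset_right (hI.inter hXS)
    with h | h
  · rcases h.eq_empty_or_singleton with h | ⟨u, h⟩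
    · exact Or.inl fun x hx hxI => (h ▸ ⟨hxI, hx⟩ : x ∈ (∅ : Set V))
    · have hu : u ∈ I ∩ X := h ▸ rfl
      refine Or.inr (Or.inl ⟨u, hu.2, fun x hx => ⟨fun hxI => ?_, fun hxu => hxu ▸ hu.1⟩⟩)
      exact (h ▸ ⟨hxI, hx⟩ : x ∈ ({u} : Set V))
  · exact Or.inr (Or.inr (Set.inter_eq_right.1 h))

lemma mem_angleSet_iff {v : V} :
    v ∈ AngleSet G X ↔ v ∉ X ∧ ∀ a ∈ X, ∀ b ∈ X, (G.Adj a v ↔ G.Adj b v) := by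
  simp only [AngleSet, Set.mem_ofPred_eq, and_congr_right_iff]
  intro _
  constructor
  · rintro (h | h) a ha b hb
    · exact iff_of_true (h a ha).symm (h b hb).symm
    · exact iff_of_false (fun h' => h a ha h'.symm) (fun h' => h b hb h'.symm)
  · intro h
    by_cases hv : ∃ x ∈ X, G.Adj v x
    · obtain ⟨x, hx, hvx⟩ := hv
      exact Or.inl fun y hy => ((h x hx y hy).1 hvx.symm).symm
    · push Not at hv
      exact Or.inr hv

lemma angleSet_anti {Y : Set V} (hXY : X ⊆ Y) : AngleSet G Y ⊆ AngleSet G X :=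
  fun _ ⟨hv, h⟩ => ⟨fun hx => hv (hXY hx),
    h.imp (fun h x hx => h x (hXY hx)) (fun h x hx => h x (hXY hx))⟩

lemma mem_xSet_iff {u v : V} (hu : u ∈ X) :
    v ∈ XSet G X u ↔ v ∉ X ∧ ∀ z ∈ X, z ≠ u → (G.Adj u z ↔ G.Adj v z) := by
  simp only [XSet, Set.mem_ofPred_eq, and_congr_right_iff]
  intro hv
  have hsub : ({u, v} : Set V) ⊆ X ∪ {v} :=
    Set.insert_subset (Or.inl hu) (Set.singleton_subset_iff.2 (Or.inr rfl))
  rw [isInterval_induce_iff hsub, isIntervalIn_pair_iff]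
  constructor
  · exact fun h z hz hzu => h z (Or.inl hz) hzu (ne_of_mem_of_not_mem hz hv)
  · rintro h z (hz | rfl) hzu hzv
    exacts [h z hz hzu, absurd rfl hzv]

lemma mem_angleSet_or_exists_mem_xSet (hind : Indecomposable (G.induce X)) {v : V} (hv : v ∉ X)
    (hdec : ¬ Indecomposable (G.induce (X ∪ {v}))) :
    v ∈ AngleSet G X ∨ ∃ u ∈ X, v ∈ XSet G X u := by
  obtain ⟨I, hIS, hI, hItriv, hIne⟩ := exists_isIntervalIn_of_not_indecomposable hdec
  rcases hI.inter_trichotomy hind Set.subset_union_left with hXI | ⟨u, hu, hXI⟩ | hXI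
  · obtain ⟨a, ha, b, hb, hab⟩ := hItriv
    have hIv : ∀ x ∈ I, x = v := fun x hx => (hIS hx).resolve_left (hXI x · hx)
    exact absurd ((hIv a ha).trans (hIv b hb).symm) hab
  · refine Or.inr ⟨u, hu, (mem_xSet_iff hu).2 ⟨hv, fun z hz hzu => ?_⟩⟩
    have huI : u ∈ I := (hXI u hu).2 rfl
    have hvI : v ∈ I := by
      obtain ⟨x, hx, hxu⟩ := hItriv.exists_ne u
      rcases hIS hx with hxX | rfl
      exacts [absurd ((hXI x hxX).1 hx) hxu, hx]
    exact hI z (Or.inl hz) (fun h => hzu ((hXI z hz).1 h)) u huI v hvI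
  · have hvI : v ∉ I := fun hvI =>
      hIne (hIS.antisymm (Set.union_subset hXI (Set.singleton_subset_iff.2 hvI)))
    refine Or.inl (mem_angleSet_iff.2 ⟨hv, fun a ha b hb => ?_⟩)
    exact hI v (Or.inr rfl) hvI a (hXI ha) b (hXI hb)

lemma notMem_angleSet_of_mem_extSet (hX : X.Nontrivial) {v : V} (hv : v ∈ ExtSet G X) :
    v ∉ AngleSet G X := by
  intro hvA
  obtain ⟨hvX, huni⟩ := mem_angleSet_iff.1 hvA
  have hI : IsIntervalIn G (X ∪ {v}) X := by
    rintro z (hz | rfl) hzX a ha b hb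
    exacts [absurd hz hzX, huni a ha b hb]
  rcases hv.2.subsingleton_or_eq_of_isIntervalIn Set.subset_union_left hI with h | h
  · exact hX.not_subsingleton h
  · exact hvX (h ▸ Or.inr rfl)

lemma notMem_angleSet_of_mem_xSet (hind : Indecomposable (G.induce X)) (hX : 2 < X.ncard)
    {u v : V} (hu : u ∈ X) (hv : v ∈ XSet G X u) : v ∉ AngleSet G X := by
  intro hvA
  have hvu := ((mem_xSet_iff hu).1 hv).2
  have huni := (mem_angleSet_iff.1 hvA).2
  -- every vertex of `X \ {u}` sees `u` as it sees `v`, and `v` is seen alike by all of `X`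
  have hI : IsIntervalIn G X (X \ {u}) := by
    rintro z hz hzI a ⟨ha, hau⟩ b ⟨hb, hbu⟩
    obtain rfl : z = u := by_contra fun h => hzI ⟨hz, h⟩
    rw [G.adj_comm a, G.adj_comm b, hvu a ha hau, hvu b hb hbu, G.adj_comm v, G.adj_comm v]
    exact huni a ha b hb
  rcases hind.subsingleton_or_eq_of_isIntervalIn Set.sdiff_subset hI with h | h
  · have hcard : 1 < (X \ {u}).ncard := by rw [Set.ncard_sdiff_singleton_of_mem hu]; omega
    exact (Set.one_lt_ncard_iff_nontrivial_and_finite.1 hcard).1.not_subsingleton h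
  · rw [← h] at hu
    exact hu.2 rfl

lemma notMem_xSet_of_mem_xSet (hind : Indecomposable (G.induce X)) (hX : 2 < X.ncard)
    {u u' v : V} (hu : u ∈ X) (hu' : u' ∈ X) (huu' : u ≠ u') (hv : v ∈ XSet G X u) :
    v ∉ XSet G X u' := by
  intro hv'
  have hI : IsIntervalIn G X {u, u'} := isIntervalIn_pair_iff.2 fun z hz hzu hzu' => by
    rw [((mem_xSet_iff hu).1 hv).2 z hz hzu, ((mem_xSet_iff hu').1 hv').2 z hz hzu']
  rcases hind.subsingleton_or_eq_of_isIntervalIn (Set.insert_subset hu (by simpa)) hI with h | h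
  · exact huu' (h (Or.inl rfl) (Or.inr rfl))
  · rw [← h, Set.ncard_pair huu'] at hX
    exact lt_irrefl _ hX

/-- The disjuncts record what a nontrivial proper interval of `G[X ∪ {v, w}]` can be: `{v, w}`,
`X` or `X ∪ {w}`, `X ∪ {v}`, `{u, v}`, `{u, w}` or `{u, v, w}` with `u ∈ X`. -/
lemma cases_of_not_indecomposable_union_pair (hind : Indecomposable (G.induce X)) {v w : V}
    (hv : v ∉ X) (hw : w ∉ X) (hvw : v ≠ w)
    (hdec : ¬ Indecomposable (G.induce (X ∪ {v, w}))) :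
    (∀ x ∈ X, (G.Adj v x ↔ G.Adj w x)) ∨ v ∈ AngleSet G X ∨ w ∈ AngleSet G (X ∪ {v}) ∨
      (∃ u ∈ X, v ∈ XSet G X u ∧ (G.Adj u w ↔ G.Adj v w)) ∨
      (∃ u ∈ X, w ∈ XSet G X u ∧ (G.Adj u v ↔ G.Adj w v)) ∨
      (∃ u ∈ X, v ∈ XSet G X u ∧ w ∈ XSet G X u) := by
  obtain ⟨I, hIS, hI, hItriv, hIne⟩ := exists_isIntervalIn_of_not_indecomposable hdec
  have hvS : v ∈ X ∪ {v, w} := Or.inr (Or.inl rfl)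
  have hwS : w ∈ X ∪ {v, w} := Or.inr (Or.inr rfl)
  rcases hI.inter_trichotomy hind Set.subset_union_left with hXI | ⟨u, hu, hXI⟩ | hXI
  · have hI' : ∀ x ∈ I, x = v ∨ x = w := fun x hx => (hIS hx).resolve_left (hXI x · hx)
    obtain ⟨x, hx, hxw⟩ := hItriv.exists_ne w
    obtain ⟨y, hy, hyv⟩ := hItriv.exists_ne v
    have hvI : v ∈ I := (hI' x hx).resolve_right hxw ▸ hx
    have hwI : w ∈ I := (hI' y hy).resolve_left hyv ▸ hy
    exact Or.inl fun x hx => hI x (Or.inl hx) (hXI x hx) v hvI w hwI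
  · have huI : u ∈ I := (hXI u hu).2 rfl
    have hXSet : ∀ y ∈ I, y ∉ X → y ∈ XSet G X u := fun y hy hyX =>
      (mem_xSet_iff hu).2
        ⟨hyX, fun z hz hzu => hI z (Or.inl hz) (hzu ∘ (hXI z hz).1) u huI y hy⟩
    right; right; right
    by_cases hvI : v ∈ I <;> by_cases hwI : w ∈ I
    · exact Or.inr (Or.inr ⟨u, hu, hXSet v hvI hv, hXSet w hwI hw⟩)
    · exact Or.inl ⟨u, hu, hXSet v hvI hv, hI w hwS hwI u huI v hvI⟩
    · exact Or.inr (Or.inl ⟨u, hu, hXSet w hwI hw, hI v hvS hvI u huI w hwI⟩)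
    · exfalso
      obtain ⟨x, hx, hxu⟩ := hItriv.exists_ne u
      rcases hIS hx with hxX | rfl | rfl
      exacts [hxu ((hXI x hxX).1 hx), hvI hx, hwI hx]
  · by_cases hvI : v ∈ I
    · have hwI : w ∉ I := fun hwI =>
        hIne (hIS.antisymm (Set.union_subset hXI (Set.insert_subset hvI (by simpa))))
      have hXvI : X ∪ {v} ⊆ I := Set.union_subset hXI (Set.singleton_subset_iff.2 hvI)
      refine Or.inr (Or.inr (Or.inl (mem_angleSet_iff.2 ⟨?_, fun a ha b hb => ?_⟩)))
      · rintro (hwX | rfl)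
        exacts [hw hwX, hvw rfl]
      · exact hI w hwS hwI a (hXvI ha) b (hXvI hb)
    · refine Or.inr (Or.inl (mem_angleSet_iff.2 ⟨hv, fun a ha b hb => ?_⟩))
      exact hI v hvS hvI a (hXI ha) b (hXI hb)

lemma adj_iff_of_mem_xSet (hind : Indecomposable (G.induce X)) (hX : 2 < X.ncard) {u t z : V}
    (hu : u ∈ X) (ht : t ∈ XSet G X u) (hz : z ∉ X) (hzu : z ∉ XSet G X u)
    (hdec : ¬ Indecomposable (G.induce (X ∪ {t, z}))) : G.Adj t z ↔ G.Adj u z := by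
  obtain ⟨htX, htu⟩ := (mem_xSet_iff hu).1 ht
  have htz : t ≠ z := fun h => hzu (h ▸ ht)
  rcases cases_of_not_indecomposable_union_pair hind htX hz htz hdec with hagree | htA | hzA |
    ⟨u', hu', ht', hadj⟩ | ⟨u', hu', hz', hadj⟩ | ⟨u', hu', ht', hz'⟩
  · refine absurd ((mem_xSet_iff hu).2 ⟨hz, fun x hx hxu => ?_⟩) hzu
    exact (htu x hx hxu).trans (hagree x hx)
  · exact absurd htA (notMem_angleSet_of_mem_xSet hind hX hu ht)
  · exact (mem_angleSet_iff.1 hzA).2 t (Or.inr rfl) u (Or.inl hu)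
  · obtain rfl : u' = u :=
      by_contra fun h => notMem_xSet_of_mem_xSet hind hX hu hu' (Ne.symm h) ht ht'
    exact hadj.symm
  · obtain rfl | hne := eq_or_ne u' u
    · exact absurd hz' hzu
    · have hzu' := ((mem_xSet_iff hu').1 hz').2 u hu hne.symm
      calc G.Adj t z ↔ G.Adj t u' := by rw [G.adj_comm t z, G.adj_comm t u']; exact hadj.symm
        _ ↔ G.Adj u u' := (htu u' hu' hne).symm
        _ ↔ G.Adj u z := by rw [G.adj_comm u u', G.adj_comm u z]; exact hzu'
  · obtain rfl : u' = u :=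
      by_contra fun h => notMem_xSet_of_mem_xSet hind hX hu hu' (Ne.symm h) ht ht'
    exact absurd hz' hzu

lemma xSet_eq_empty (hG : Indecomposable G) (hind : Indecomposable (G.induce X))
    (hX : 2 < X.ncard)
    (hdec : ∀ v w, v ∉ X → w ∉ X → v ≠ w →
      ¬ Indecomposable (G.induce (X ∪ {v, w})))
    {u : V} (hu : u ∈ X) : XSet G X u = ∅ := by
  set K := insert u (XSet G X u)
  have hadj : ∀ t ∈ K, ∀ z ∉ K, G.Adj t z ↔ G.Adj u z := by
    rintro t (rfl | ht) z hz
    · rfl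
    have hzu : z ∉ XSet G X u := fun h => hz (Or.inr h)
    obtain ⟨htX, htu⟩ := (mem_xSet_iff hu).1 ht
    by_cases hzX : z ∈ X
    · exact (htu z hzX fun h => hz (Or.inl h)).symm
    · exact adj_iff_of_mem_xSet hind hX hu ht hzX hzu
        (hdec t z htX hzX fun h => hzu (h ▸ ht))
  have hK : IsInterval G K := fun z hz a ha b hb =>
    (hadj a ha z hz).trans (hadj b hb z hz).symm
  rcases hG.subsingleton_or_eq_univ hK with h | h
  · refine Set.eq_empty_of_forall_notMem fun y hy => ?_
    exact ((mem_xSet_iff hu).1 hy).1 (h (Or.inr hy) (Or.inl rfl) ▸ hu)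
  · have hXnt : X.Nontrivial := (Set.one_lt_ncard_iff_nontrivial_and_finite.1 (by omega)).1
    obtain ⟨a, ha, hau⟩ := hXnt.exists_ne u
    exfalso
    rcases (h ▸ Set.mem_univ a : a ∈ K) with rfl | haX
    exacts [hau rfl, ((mem_xSet_iff hu).1 haX).1 ha]

lemma adj_iff_of_mem_extSet (hind : Indecomposable (G.induce X)) (hX : X.Nontrivial)
    (hXS : ∀ u ∈ X, XSet G X u = ∅) {t z x : V} (ht : t ∈ ExtSet G X)
    (hz : z ∈ AngleSet G X) (hx : x ∈ X) (hdec : ¬ Indecomposable (G.induce (X ∪ {t, z}))) :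
    G.Adj t z ↔ G.Adj x z := by
  have hnX : ∀ u ∈ X, ∀ y, y ∉ XSet G X u := fun u hu =>
    Set.eq_empty_iff_forall_notMem.1 (hXS u hu)
  have htz : t ≠ z := fun h => notMem_angleSet_of_mem_extSet hX ht (h ▸ hz)
  obtain ⟨hzX, hzuni⟩ := mem_angleSet_iff.1 hz
  rcases cases_of_not_indecomposable_union_pair hind ht.1 hzX htz hdec with
    hagree | htA | hzA | ⟨u, hu, htu, -⟩ | ⟨u, hu, hzu, -⟩ | ⟨u, hu, htu, -⟩
  · refine absurd (mem_angleSet_iff.2 ⟨ht.1, fun a ha b hb => ?_⟩)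
      (notMem_angleSet_of_mem_extSet hX ht)
    rw [G.adj_comm a, G.adj_comm b, hagree a ha, hagree b hb, G.adj_comm z, G.adj_comm z]
    exact hzuni a ha b hb
  · exact absurd htA (notMem_angleSet_of_mem_extSet hX ht)
  · exact (mem_angleSet_iff.1 hzA).2 t (Or.inr rfl) x (Or.inl hx)
  exacts [absurd htu (hnX u hu t), absurd hzu (hnX u hu z), absurd htu (hnX u hu t)]

lemma angleSet_eq_empty (hG : Indecomposable G) (hind : Indecomposable (G.induce X))
    (hX : 2 < X.ncard)
    (hdec : ∀ v w, v ∉ X → w ∉ X → v ≠ w →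
      ¬ Indecomposable (G.induce (X ∪ {v, w}))) :
    AngleSet G X = ∅ := by
  have hXnt : X.Nontrivial := (Set.one_lt_ncard_iff_nontrivial_and_finite.1 (by omega)).1
  have hXS : ∀ u ∈ X, XSet G X u = ∅ := fun u hu => xSet_eq_empty hG hind hX hdec hu
  obtain ⟨x, hx⟩ := hXnt.nonempty
  set M := X ∪ ExtSet G X
  have hA : ∀ z ∉ M, z ∈ AngleSet G X := by
    intro z hz
    have hzX : z ∉ X := fun h => hz (Or.inl h)
    rcases mem_angleSet_or_exists_mem_xSet hind hzX fun h => hz (Or.inr ⟨hzX, h⟩) with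
      h | ⟨u, hu, h⟩
    exacts [h, absurd h (Set.eq_empty_iff_forall_notMem.1 (hXS u hu) z)]
  have hadj : ∀ t ∈ M, ∀ z ∉ M, G.Adj t z ↔ G.Adj x z := by
    rintro t (htX | ht) z hz
    · exact (mem_angleSet_iff.1 (hA z hz)).2 t htX x hx
    · exact adj_iff_of_mem_extSet hind hXnt hXS ht (hA z hz) hx
        (hdec t z ht.1 (hA z hz).1 fun h => hz (Or.inr (h ▸ ht)))
  have hM : IsInterval G M := fun z hz a ha b hb =>
    (hadj a ha z hz).trans (hadj b hb z hz).symm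
  rcases hG.subsingleton_or_eq_univ hM with h | h
  · exact absurd (h.anti Set.subset_union_left) hXnt.not_subsingleton
  · refine Set.eq_empty_of_forall_notMem fun z hz => ?_
    rcases (h ▸ Set.mem_univ z : z ∈ M) with hzX | hzE
    exacts [hz.1 hzX, notMem_angleSet_of_mem_extSet hXnt hzE hz]

lemma isInterval_compl (hG : Indecomposable G) (hind : Indecomposable (G.induce X))
    (hX : 2 < X.ncard)
    (hdec : ∀ v w, v ∉ X → w ∉ X → v ≠ w →
      ¬ Indecomposable (G.induce (X ∪ {v, w}))) :
    IsInterval G Xᶜ := by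
  have hnA := Set.eq_empty_iff_forall_notMem.1 (angleSet_eq_empty hG hind hX hdec)
  have hnX : ∀ u ∈ X, ∀ y, y ∉ XSet G X u := fun u hu =>
    Set.eq_empty_iff_forall_notMem.1 (xSet_eq_empty hG hind hX hdec hu)
  intro z hz a ha b hb
  obtain rfl | hab := eq_or_ne a b
  · rfl
  rcases cases_of_not_indecomposable_union_pair hind ha hb hab (hdec a b ha hb hab) with
    hagree | haA | hbA | ⟨u, hu, hau, -⟩ | ⟨u, hu, hbu, -⟩ | ⟨u, hu, hau, -⟩
  · exact hagree z (not_not.1 hz)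
  · exact absurd haA (hnA a)
  · exact absurd (angleSet_anti Set.subset_union_left hbA) (hnA b)
  exacts [absurd hau (hnX u hu a), absurd hbu (hnX u hu b), absurd hau (hnX u hu a)]

theorem extend_by_two_general {V : Type*} (G : SimpleGraph V)
    (hG : Indecomposable G) (X : Set V) (hX : 4 ≤ X.ncard)
    (hout : 2 ≤ (Set.univ \ X).ncard) (hind : Indecomposable (G.induce X)) :
    ∃ x y : V, x ∉ X ∧ y ∉ X ∧ x ≠ y ∧
      Indecomposable (G.induce (X ∪ {x, y})) := by
  by_contra! hdec
  rw [← Set.compl_eq_univ_sdiff] at hout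
  rcases hG.subsingleton_or_eq_univ (isInterval_compl hG hind (by omega) hdec) with h | h
  · have := (Set.ncard_le_one h.finite).2 h
    omega
  · rw [Set.compl_univ_iff] at h
    simp [h] at hX

theorem extend_by_two {V : Type*} [Fintype V] (G : SimpleGraph V)
    (hG : Indecomposable G) (X : Set V) (hX : 4 ≤ X.ncard)
    (hout : 2 ≤ (Set.univ \ X).ncard) (hind : Indecomposable (G.induce X)) :
    ∃ x y : V, x ∉ X ∧ y ∉ X ∧ x ≠ y ∧
      Indecomposable (G.induce (X ∪ {x, y})) :=
  extend_by_two_general G hG X hX hout hind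
end

section
/- Let G be a graph on {1,…,n} with n ≥ 9 such that G − n = P_{n−1} and the neighbourhood of n in G is {k} for some k with 3 ≤ k ≤ n−3. Then G is indecomposable and its indecomposability graph is {1, n−1}-covered (every pair {x,y} of distinct vertices with {x,y} ∩ {1,n−1} = ∅ satisfies that G − {x,y} is decomposable). -/
/-!
Deleting the pendant vertex `n` leaves the path `P_{n-1}`, which is indecomposable because
`n - 1 ≥ 4`: an interval with two vertices contains two consecutive ones, and an interval
containing two consecutive vertices spreads along the whole path. So an interval of `G` meets
the path trivially, and it is trivial in `G` because `n` is not uniform on the path and is no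
twin of a path vertex `u` (every path vertex has a path neighbour other than `k`, as
`3 ≤ k ≤ n - 3`).

Deleting two vertices other than `1` and `n - 1` deletes an inner path vertex `p`, which cuts
off the vertices before `p`, while one of the path edges `{1,2}`, `{3,4}`, `{5,6}` survives.
The side of the cut containing that edge is a nontrivial interval.
-/

open SimpleGraph

variable {V : Type*}

section Intervals

variable {W : Type*} {G : SimpleGraph V} {H : SimpleGraph W}

theorem IsInterval.comap {I : Set V} (hI : IsInterval G I) (f : H ↪g G) :
    IsInterval H (f ⁻¹' I) := fun x hx a ha b hb => by
  simpa only [f.map_adj_iff] using hI (f x) hx (f a) ha (f b) hb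

theorem IsInterval.mem_of_adj_of_not_adj {I : Set V} (hI : IsInterval G I) {a b w : V}
    (ha : a ∈ I) (hb : b ∈ I) (haw : G.Adj a w) (hbw : ¬ G.Adj b w) : w ∈ I := by
  by_contra hw
  exact hbw ((hI w hw a ha b hb).1 haw)

theorem isInterval_of_separated {S : Set V} (hS : ∀ a ∈ S, ∀ b ∉ S, ¬ G.Adj a b) :
    IsInterval G S :=
  fun x hx a ha b hb => iff_of_false (hS a ha x hx) (hS b hb x hx)

theorem Decomposable.of_isInterval {I : Set V} (hI : IsInterval G I) {a b c : V}
    (ha : a ∈ I) (hb : b ∈ I) (hab : a ≠ b) (hc : c ∉ I) : Decomposable G := by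
  intro hG
  rcases hG I hI with rfl | rfl | ⟨x, rfl⟩
  · exact ha
  · exact hc trivial
  · exact hab (ha.trans hb.symm)

theorem decomposable_of_separated {S : Set V} (hS : ∀ a ∈ S, ∀ b ∉ S, ¬ G.Adj a b)
    {a b c d : V} (hab : G.Adj a b) (hc : c ∈ S) (hd : d ∉ S) : Decomposable G := by
  by_cases ha : a ∈ S
  · have hb : b ∈ S := by_contra fun hb => hS a ha b hb hab
    exact Decomposable.of_isInterval (isInterval_of_separated hS) ha hb hab.ne hd
  · have hb : b ∉ S := fun hb => hS b hb a ha hab.symm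
    have hSc : ∀ a ∈ Sᶜ, ∀ b ∉ Sᶜ, ¬ G.Adj a b :=
      fun a ha b hb hab => hS b (not_not.mp hb) a ha hab.symm
    exact Decomposable.of_isInterval (isInterval_of_separated hSc) ha hb hab.ne (not_not.mpr hc)

theorem indecomposable_of_forall_isInterval
    (h : ∀ I, IsInterval G I → ∀ a ∈ I, ∀ b ∈ I, a ≠ b → I = Set.univ) : Indecomposable G := by
  intro I hI
  by_cases hsub : I.Subsingleton
  · rcases hsub.eq_empty_or_singleton with h | h
    · exact Or.inl h
    · exact Or.inr (Or.inr h)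
  · obtain ⟨a, ha, b, hb, hab⟩ := Set.not_subsingleton_iff.mp hsub
    exact Or.inr (Or.inl (h I hI a ha b hb hab))

theorem Indecomposable.map_iso (hG : Indecomposable G) (e : G ≃g H) : Indecomposable H := by
  intro I hI
  rw [← Set.image_preimage_eq I e.surjective]
  rcases hG _ (hI.comap e.toEmbedding) with h | h | ⟨x, h⟩ <;> change e ⁻¹' I = _ at h <;> rw [h]
  · exact Or.inl (Set.image_empty _)
  · exact Or.inr (Or.inl (Set.image_univ_of_surjective e.surjective))
  · exact Or.inr (Or.inr ⟨e x, Set.image_singleton⟩)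

/-- In the paper's notation, with `X = V ∖ {v}`: `G[X]` indecomposable, `v ∉ ⟨X⟩` and
`v ∉ X(u)` for all `u ∈ X`. -/
theorem Indecomposable.of_induce_compl_singleton {v : V} (hind : Indecomposable (G.induce {v}ᶜ))
    (hcompl : ¬ IsInterval G {v}ᶜ) (hpair : ∀ u ≠ v, ¬ IsInterval G {u, v}) :
    Indecomposable G := by
  intro I hI
  rcases hind _ (hI.comap (Embedding.induce _)) with h | h | ⟨⟨u, hu⟩, h⟩ <;>
    simp only [Set.ext_iff] at h
  · have hsub : I ⊆ {v} := fun x hx => by_contra fun hxv => (h ⟨x, hxv⟩).1 hx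
    rcases Set.subset_singleton_iff_eq.mp hsub with h | h
    · exact Or.inl h
    · exact Or.inr (Or.inr ⟨v, h⟩)
  · have hsub : {v}ᶜ ⊆ I := fun x hx => (h ⟨x, hx⟩).2 trivial
    by_cases hv : v ∈ I
    · refine Or.inr (Or.inl (Set.eq_univ_of_forall fun x => ?_))
      rcases eq_or_ne x v with rfl | hx
      exacts [hv, hsub hx]
    · have hIv : I = {v}ᶜ := by
        ext x
        rcases eq_or_ne x v with rfl | hx
        · simp [hv]
        · simp [hx, hsub hx]
      exact absurd (hIv ▸ hI) hcompl
  · have hI_u (x : V) (hx : x ≠ v) : x ∈ I ↔ x = u := by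
      simpa [Subtype.ext_iff] using h ⟨x, hx⟩
    by_cases hv : v ∈ I
    · have hIuv : I = {u, v} := by
        ext x
        rcases eq_or_ne x v with rfl | hx
        · simp [hv]
        · simp [hI_u x hx, hx]
      exact absurd (hIuv ▸ hI) (hpair u hu)
    · refine Or.inr (Or.inr ⟨u, ?_⟩)
      ext x
      rcases eq_or_ne x v with rfl | hx
      · simp [hv, Ne.symm hu]
      · simp [hI_u x hx]

end Intervals

theorem P_adj {m : ℕ} {i j : Fin m} : (P m).Adj i j ↔ (i : ℕ) + 1 = j ∨ (j : ℕ) + 1 = i := by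
  simp only [P, fromRel_adj, ne_eq, Fin.ext_iff]
  omega

section Path

variable {m : ℕ} {I : Set (Fin m)}

theorem IsInterval.P_exists_succ_mem (hI : IsInterval (P m) I) (hm : 4 ≤ m) {a b : Fin m}
    (ha : a ∈ I) (hb : b ∈ I) (hab : a < b) : ∃ i j : Fin m, (i : ℕ) + 1 = j ∧ i ∈ I ∧ j ∈ I := by
  rw [Fin.lt_def] at hab
  by_cases hb1 : (a : ℕ) + 1 = b
  · exact ⟨a, b, hb1, ha, hb⟩
  let c : Fin m := ⟨a + 1, by omega⟩
  by_cases hc : c ∈ I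
  · exact ⟨a, c, rfl, ha, hc⟩
  -- `c ∉ I` sees `a`, hence also `b`
  have hb2 : (b : ℕ) = a + 2 := by
    have hbc := (hI c hc a ha b hb).1 (P_adj.2 (Or.inl rfl))
    rw [P_adj] at hbc
    dsimp only [c] at hbc
    omega
  rcases Nat.eq_zero_or_pos a with ha0 | ha0
  · let d : Fin m := ⟨3, by omega⟩
    refine ⟨b, d, ?_, hb, hI.mem_of_adj_of_not_adj hb ha ?_ ?_⟩ <;>
      (try rw [P_adj]) <;> dsimp only [d] <;> omega
  · let d : Fin m := ⟨a - 1, by omega⟩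
    refine ⟨d, a, ?_, hI.mem_of_adj_of_not_adj ha hb ?_ ?_, ha⟩ <;>
      (try rw [P_adj]) <;> dsimp only [d] <;> omega

theorem IsInterval.P_eq_univ_of_succ_mem (hI : IsInterval (P m) I) {i j : Fin m}
    (hij : (i : ℕ) + 1 = j) (hi : i ∈ I) (hj : j ∈ I) : I = Set.univ := by
  refine Set.eq_univ_of_forall fun w => ?_
  -- induction on the distance `d` from `w` to `{i, j}`: the two vertices next to `w` towards
  -- `{i, j}` are closer, and only the first one sees `w`
  induction hd : (w : ℕ) - j + (i - w) using Nat.strong_induction_on generalizing w with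
  | _ d ih =>
  rcases eq_or_ne w i with rfl | hwi
  · exact hi
  rcases eq_or_ne w j with rfl | hwj
  · exact hj
  rw [ne_eq, Fin.ext_iff] at hwi hwj
  rcases lt_or_gt_of_ne hwi with hw | hw
  · let w₁ : Fin m := ⟨w + 1, by omega⟩
    let w₂ : Fin m := ⟨w + 2, by omega⟩
    refine hI.mem_of_adj_of_not_adj (a := w₁) (b := w₂) (ih _ ?_ w₁ rfl) (ih _ ?_ w₂ rfl) ?_ ?_ <;>
      (try rw [P_adj]) <;> dsimp only [w₁, w₂] <;> omega
  · let w₁ : Fin m := ⟨w - 1, by have := w.isLt; omega⟩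
    let w₂ : Fin m := ⟨w - 2, by omega⟩
    refine hI.mem_of_adj_of_not_adj (a := w₁) (b := w₂) (ih _ ?_ w₁ rfl) (ih _ ?_ w₂ rfl) ?_ ?_ <;>
      (try rw [P_adj]) <;> dsimp only [w₁, w₂] <;> omega

theorem indecomposable_P (hm : 4 ≤ m) : Indecomposable (P m) := by
  refine indecomposable_of_forall_isInterval fun I hI a ha b hb hab => ?_
  obtain ⟨i, j, hij, hi, hj⟩ := (lt_or_gt_of_ne hab).elim
    (hI.P_exists_succ_mem hm ha hb) (hI.P_exists_succ_mem hm hb ha)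
  exact hI.P_eq_univ_of_succ_mem hij hi hj

end Path

/-- Index `i` is the paper's vertex `i + 1`: this is `P_{n-1}` plus a vertex `n` whose only
neighbour is `k`. -/
def pathWithPendant (n k : ℕ) : SimpleGraph (Fin n) :=
  SimpleGraph.fromRel fun i j =>
    ((i : ℕ) + 1 = j ∧ (j : ℕ) < n - 1) ∨ ((i : ℕ) = n - 1 ∧ (j : ℕ) + 1 = k)

section PathWithPendant

variable {n k : ℕ}

theorem pathWithPendant_adj {i j : Fin n} :
    (pathWithPendant n k).Adj i j ↔ (i : ℕ) ≠ j ∧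
      ((i : ℕ) + 1 = j ∧ (j : ℕ) < n - 1 ∨ (j : ℕ) + 1 = i ∧ (i : ℕ) < n - 1 ∨
        (i : ℕ) = n - 1 ∧ (j : ℕ) + 1 = k ∨ (j : ℕ) = n - 1 ∧ (i : ℕ) + 1 = k) := by
  simp only [pathWithPendant, fromRel_adj, ne_eq, Fin.ext_iff]
  omega

theorem eq_pathWithPendant (hn : 0 < n) {G : SimpleGraph (Fin n)}
    (hpath : ∀ i j : Fin n, (i : ℕ) < n - 1 → (j : ℕ) < n - 1 →
      (G.Adj i j ↔ ((i : ℕ) + 1 = (j : ℕ) ∨ (j : ℕ) + 1 = (i : ℕ))))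
    (hN : ∀ j : Fin n, G.Adj ⟨n - 1, by omega⟩ j ↔ (j : ℕ) + 1 = k) :
    G = pathWithPendant n k := by
  have hlast (v : Fin n) (hv : ¬ (v : ℕ) < n - 1) : v = ⟨n - 1, by omega⟩ :=
    Fin.ext (by have := v.isLt; dsimp only; omega)
  ext i j
  rw [pathWithPendant_adj]
  by_cases hi : (i : ℕ) < n - 1 <;> by_cases hj : (j : ℕ) < n - 1
  · rw [hpath i j hi hj]
    omega
  · rw [hlast j hj, G.adj_comm, hN]
    dsimp only
    omega
  · rw [hlast i hi, hN]
    dsimp only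
    omega
  · rw [hlast i hi, hlast j hj]
    simp

theorem val_lt_sub_one_of_mem_compl {h : n - 1 < n} {v : Fin n}
    (hv : v ∈ ({⟨n - 1, h⟩} : Set (Fin n))ᶜ) : (v : ℕ) < n - 1 := by
  have : (v : ℕ) ≠ n - 1 := fun h' => hv (Fin.ext h')
  have := v.isLt
  omega

def pathWithPendantInduceIso (hn : 0 < n) :
    (pathWithPendant n k).induce {⟨n - 1, by omega⟩}ᶜ ≃g P (n - 1) where
  toFun v := ⟨v.1, val_lt_sub_one_of_mem_compl v.2⟩
  invFun i := ⟨⟨i, by omega⟩, by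
    simp only [Set.mem_compl_iff, Set.mem_singleton_iff, Fin.ext_iff]
    omega⟩
  left_inv _ := rfl
  right_inv _ := rfl
  map_rel_iff' {a b} := by
    have ha := val_lt_sub_one_of_mem_compl a.2
    have hb := val_lt_sub_one_of_mem_compl b.2
    simp only [Equiv.coe_fn_mk, P_adj, comap_adj, Function.Embedding.subtype_apply,
      pathWithPendant_adj]
    omega

theorem indecomposable_pathWithPendant (hk₁ : 3 ≤ k) (hk₂ : k ≤ n - 3) :
    Indecomposable (pathWithPendant n k) := by
  set v : Fin n := ⟨n - 1, by omega⟩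
  refine ((indecomposable_P (by omega)).map_iso (pathWithPendantInduceIso (by omega)).symm)
    |>.of_induce_compl_singleton (v := v) ?_ ?_
  · intro hI
    -- `v` sees `k - 1` but not `0`
    have hmem (i : ℕ) (hi : i < n - 1) : (⟨i, by omega⟩ : Fin n) ∈ ({v}ᶜ : Set (Fin n)) := by
      simp only [Set.mem_compl_iff, Set.mem_singleton_iff, Fin.ext_iff, v]
      omega
    have := hI v (by simp) ⟨k - 1, by omega⟩ (hmem _ (by omega)) ⟨0, by omega⟩ (hmem _ (by omega))
    simp only [pathWithPendant_adj, v, true_and] at this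
    omega
  · intro u hu hI
    have hu' : (u : ℕ) < n - 1 := val_lt_sub_one_of_mem_compl hu
    -- a path neighbour of `u` other than `k - 1` sees `u` but not `v`
    obtain ⟨w, hwu, hw, hwk⟩ : ∃ w : ℕ, (w + 1 = u ∨ u + 1 = w) ∧ w < n - 1 ∧ w + 1 ≠ k := by
      by_cases h : 1 ≤ (u : ℕ) ∧ (u : ℕ) ≠ k
      · exact ⟨u - 1, by omega⟩
      · exact ⟨u + 1, by omega⟩
    have hw_mem : (⟨w, by omega⟩ : Fin n) ∉ ({u, v} : Set (Fin n)) := by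
      simp only [Set.mem_insert_iff, Set.mem_singleton_iff, not_or, Fin.ext_iff, v]
      omega
    have := hI _ hw_mem u (by simp) v (by simp)
    simp only [pathWithPendant_adj, v, true_and] at this
    omega

theorem decomposable_pathWithPendant_induce (hn : 7 ≤ n) {x y : Fin n} (hxy : x ≠ y)
    (hx₀ : (x : ℕ) ≠ 0) (hx : (x : ℕ) ≠ n - 2) (hy₀ : (y : ℕ) ≠ 0) (hy : (y : ℕ) ≠ n - 2) :
    Decomposable ((pathWithPendant n k).induce ({x, y} : Set (Fin n))ᶜ) := by
  have hxy' : (x : ℕ) ≠ y := fun h => hxy (Fin.ext h)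
  have := x.isLt
  have := y.isLt
  obtain ⟨p, hp, hpxy⟩ : ∃ p : ℕ, p < n - 1 ∧ (p = x ∨ p = y) := by
    by_cases h : (x : ℕ) < n - 1
    · exact ⟨x, h, Or.inl rfl⟩
    · exact ⟨y, by omega, Or.inr rfl⟩
  obtain ⟨i, hi, hix⟩ : ∃ i ∈ ({0, 2, 4} : Finset ℕ), i ≠ x ∧ i + 1 ≠ x ∧ i ≠ y ∧ i + 1 ≠ y := by
    by_contra! h
    simp only [Finset.mem_insert, Finset.mem_singleton, forall_eq_or_imp, forall_eq] at h
    omega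
  simp only [Finset.mem_insert, Finset.mem_singleton] at hi
  have hmem (v : Fin n) (hvx : (v : ℕ) ≠ x) (hvy : (v : ℕ) ≠ y) : v ∈ ({x, y} : Set (Fin n))ᶜ := by
    simp [Fin.ext_iff, hvx, hvy]
  -- the deleted path vertex `p` cuts off the vertices before it (and `n - 1` if `k - 1` is one)
  refine decomposable_of_separated
    (S := Subtype.val ⁻¹' {v : Fin n | (v : ℕ) < p ∨ (v : ℕ) = n - 1 ∧ k ≤ p})
    (a := ⟨⟨i, by omega⟩, hmem _ hix.1 hix.2.2.1⟩)
    (b := ⟨⟨i + 1, by omega⟩, hmem _ hix.2.1 hix.2.2.2⟩)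
    (c := ⟨⟨0, by omega⟩, hmem _ (Ne.symm hx₀) (Ne.symm hy₀)⟩)
    (d := ⟨⟨n - 2, by omega⟩, hmem _ (Ne.symm hx) (Ne.symm hy)⟩) ?_ ?_ ?_ ?_
  · rintro ⟨a, ha⟩ haS ⟨b, hb⟩ hbS hab
    simp only [Set.mem_preimage, Set.mem_ofPred_eq] at haS hbS
    simp only [comap_adj, Function.Embedding.subtype_apply, pathWithPendant_adj] at hab
    simp only [Set.mem_compl_iff, Set.mem_insert_iff, Set.mem_singleton_iff, Fin.ext_iff] at ha hb
    omega
  · rw [comap_adj, pathWithPendant_adj]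
    simp only [Function.Embedding.subtype_apply, true_and]
    omega
  · simp only [Set.mem_preimage, Set.mem_ofPred_eq]
    omega
  · simp only [Set.mem_preimage, Set.mem_ofPred_eq]
    omega

end PathWithPendant

theorem Pminus1_single_neighbour (n k : ℕ) (hn : 9 ≤ n) (hk1 : 3 ≤ k) (hk2 : k ≤ n - 3)
    (G : SimpleGraph (Fin n))
    (hpath : ∀ i j : Fin n, (i : ℕ) < n - 1 → (j : ℕ) < n - 1 →
      (G.Adj i j ↔ ((i : ℕ) + 1 = (j : ℕ) ∨ (j : ℕ) + 1 = (i : ℕ))))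
    (hN : ∀ j : Fin n, G.Adj ⟨n - 1, by omega⟩ j ↔ (j : ℕ) + 1 = k) :
    Indecomposable G ∧
    ∀ x y : Fin n, x ≠ y → (x : ℕ) ≠ 0 → (x : ℕ) ≠ n - 2 →
      (y : ℕ) ≠ 0 → (y : ℕ) ≠ n - 2 →
      Decomposable (G.induce (({x, y} : Set (Fin n))ᶜ)) := by
  obtain rfl := eq_pathWithPendant (by omega) hpath hN
  exact ⟨indecomposable_pathWithPendant hk1 hk2,
    fun x y hxy hx₀ hx hy₀ hy => decomposable_pathWithPendant_induce (by omega) hxy hx₀ hx hy₀ hy⟩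
end

section
/- Let G be a graph on {1,…,n} with n ≥ 9 such that G − n = P_{n−1} and the neighbourhood of n in G is {k, k+1} for some k with 2 ≤ k ≤ n−3. Then G is indecomposable and its indecomposability graph is {1, n−1}-covered. -/
open SimpleGraph

variable {V : Type*}

/-!
The hypotheses determine `G`: it is the path on the indices `0, …, n - 2` plus the last vertex
`n - 1` joined to `k - 1` and `k`. An interval `I` containing two path vertices contains the
whole path: otherwise some path vertex `t ∉ I` is adjacent to `I`, so `I ⊆ N(t) = {t - 1, t + 1}`,
a pair that `t + 2` or `t - 2` separates. Then `I` also contains the last vertex, which separates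
`k - 1` from `0`. The remaining candidates `{p, n - 1}` are separated by a neighbour of `p` or of
`n - 1`. Deleting two inner path vertices disconnects the graph.
-/

section Intervals

variable {G : SimpleGraph V} {I : Set V}

theorem IsInterval.subset_neighborSet (hI : IsInterval G I) {s t : V} (ht : t ∉ I) (hs : s ∈ I)
    (hst : G.Adj s t) : I ⊆ G.neighborSet t :=
  fun a ha => ((hI t ht a ha s hs).mpr hst).symm

theorem isInterval_of_forall_not_adj (h : ∀ a ∈ I, ∀ b ∉ I, ¬ G.Adj a b) : IsInterval G I :=
  fun x hx a ha b hb => iff_of_false (h a ha x hx) (h b hb x hx)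

theorem decomposable_of_isInterval (hI : IsInterval G I) (hnt : I.Nontrivial)
    (hc : Iᶜ.Nonempty) : Decomposable G := by
  intro hind
  rcases hind I hI with h | h | ⟨x, rfl⟩
  · exact hnt.nonempty.ne_empty h
  · exact hc.ne_empty (Set.compl_empty_iff.mpr h)
  · exact hnt.not_subsingleton Set.subsingleton_singleton

theorem decomposable_of_forall_not_adj (hcard : 3 ≤ Nat.card V) (hI : I.Nonempty)
    (hIc : Iᶜ.Nonempty) (h : ∀ a ∈ I, ∀ b ∉ I, ¬ G.Adj a b) : Decomposable G := by
  have hsum : 3 ≤ I.ncard + Iᶜ.ncard := by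
    rw [← Set.ncard_univ, ← Set.union_compl_self I] at hcard
    exact hcard.trans (Set.ncard_union_le I Iᶜ)
  rcases lt_or_ge 1 I.ncard with hlt | hle
  · exact decomposable_of_isInterval (isInterval_of_forall_not_adj h)
      (Set.one_lt_ncard_iff_nontrivial_and_finite.mp hlt).1 hIc
  · refine decomposable_of_isInterval (I := Iᶜ) (isInterval_of_forall_not_adj ?_)
      (Set.one_lt_ncard_iff_nontrivial_and_finite.mp (by omega)).1 (by rwa [compl_compl])
    intro a ha b hb hab
    exact h b (not_not.mp hb) a ha hab.symm

theorem decomposable_induce_of_forall_not_adj {s : Set V} (hcard : 3 ≤ s.ncard)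
    (hI : ∃ a ∈ s, a ∈ I) (hIc : ∃ b ∈ s, b ∉ I)
    (h : ∀ a ∈ s, ∀ b ∈ s, a ∈ I → b ∉ I → ¬ G.Adj a b) : Decomposable (G.induce s) := by
  obtain ⟨a, has, ha⟩ := hI
  obtain ⟨b, hbs, hb⟩ := hIc
  exact decomposable_of_forall_not_adj (I := Subtype.val ⁻¹' I) hcard ⟨⟨a, has⟩, ha⟩
    ⟨⟨b, hbs⟩, hb⟩ fun a ha b hb => h a a.2 b b.2 ha hb

end Intervals

theorem Nat.exists_lt_and_not_succ_of_le {p : ℕ → Prop} {a b : ℕ} (hab : a ≤ b) (ha : p a)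
    (hb : ¬ p b) : ∃ i < b, p i ∧ ¬ p (i + 1) := by
  induction b, hab using Nat.le_induction with
  | base => exact absurd ha hb
  | succ b hab ih =>
    by_cases hpb : p b
    · exact ⟨b, b.lt_succ_self, hpb, hb⟩
    · obtain ⟨i, hib, hi⟩ := ih hpb
      exact ⟨i, hib.trans b.lt_succ_self, hi⟩

theorem Fin.exists_consecutive_mem_not_mem {n : ℕ} {I : Set (Fin n)} {p r : Fin n} (hp : p ∈ I)
    (hr : r ∉ I) : ∃ s ∈ I, ∃ t ∉ I, ((s : ℕ) + 1 = t ∨ (t : ℕ) + 1 = s) ∧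
      (s : ℕ) ≤ max (p : ℕ) r ∧ (t : ℕ) ≤ max (p : ℕ) r := by
  have mem_of_val : ∀ v : Fin n, (v : ℕ) ∈ Fin.val '' I ↔ v ∈ I :=
    fun v => Fin.val_injective.mem_set_image
  rcases le_total (p : ℕ) r with hpr | hrp
  · obtain ⟨i, hir, ⟨s, hs, rfl⟩, hi⟩ := Nat.exists_lt_and_not_succ_of_le (p := (· ∈ Fin.val '' I))
      hpr ((mem_of_val p).mpr hp) ((mem_of_val r).not.mpr hr)
    obtain ⟨t, ht⟩ : ∃ t : Fin n, (t : ℕ) = s + 1 := ⟨⟨_, by omega⟩, rfl⟩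
    exact ⟨s, hs, t, fun htI => hi ⟨t, htI, ht⟩, by omega⟩
  · obtain ⟨i, hip, hi, hi1⟩ := Nat.exists_lt_and_not_succ_of_le (p := (· ∉ Fin.val '' I))
      hrp ((mem_of_val r).not.mpr hr) (not_not.mpr ((mem_of_val p).mpr hp))
    obtain ⟨s, hs, hsi⟩ := not_not.mp hi1
    obtain ⟨t, ht⟩ : ∃ t : Fin n, (t : ℕ) = i := ⟨⟨_, by omega⟩, rfl⟩
    exact ⟨s, hs, t, fun htI => hi ⟨t, htI, ht⟩, by omega⟩

/-- Index `i < n - 1` stands for the paper's path vertex `i + 1`, and index `n - 1` for the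
vertex `n`, whose neighbours `k, k + 1` are the indices `k - 1, k`. -/
def doubleNeighbourGraph (n k : ℕ) : SimpleGraph (Fin n) :=
  SimpleGraph.fromRel fun a b =>
    (a : ℕ) + 1 = b ∧ (b : ℕ) < n - 1 ∨ (a : ℕ) = n - 1 ∧ ((b : ℕ) + 1 = k ∨ (b : ℕ) = k)

namespace doubleNeighbourGraph

variable {n k : ℕ}

theorem adj_iff (hk : k + 2 ≤ n) {a b : Fin n} :
    (doubleNeighbourGraph n k).Adj a b ↔
      ((a : ℕ) + 1 = b ∨ (b : ℕ) + 1 = a) ∧ (a : ℕ) < n - 1 ∧ (b : ℕ) < n - 1 ∨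
      (a : ℕ) = n - 1 ∧ ((b : ℕ) + 1 = k ∨ (b : ℕ) = k) ∨
      (b : ℕ) = n - 1 ∧ ((a : ℕ) + 1 = k ∨ (a : ℕ) = k) := by
  simp only [doubleNeighbourGraph, fromRel_adj, ne_eq, Fin.ext_iff]
  omega

theorem path_mem_of_isInterval (hk : k + 2 ≤ n) (hn : 5 ≤ n) {I : Set (Fin n)}
    (hI : IsInterval (doubleNeighbourGraph n k) I) {p q : Fin n} (hpq : p ≠ q) (hp : p ∈ I)
    (hq : q ∈ I) (hpn : (p : ℕ) < n - 1) (hqn : (q : ℕ) < n - 1) {r : Fin n}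
    (hrn : (r : ℕ) < n - 1) : r ∈ I := by
  by_contra hr
  obtain ⟨s, hs, t, ht, hst, hsr, htr⟩ := Fin.exists_consecutive_mem_not_mem hp hr
  have hsub := hI.subset_neighborSet ht hs ((adj_iff hk).mpr (by omega))
  have hpt := (adj_iff hk).mp (hsub hp)
  have hqt := (adj_iff hk).mp (hsub hq)
  obtain ⟨w, hwn, hw⟩ : ∃ w : Fin n, (w : ℕ) < n - 1 ∧ ((w : ℕ) = t + 2 ∨ (w : ℕ) + 2 = t) := by
    by_cases h : (t : ℕ) + 2 < n - 1
    · exact ⟨⟨t + 2, by omega⟩, h, Or.inl rfl⟩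
    · obtain ⟨w, hw⟩ : ∃ w : Fin n, (w : ℕ) + 2 = t := ⟨⟨t - 2, by omega⟩, by simp only; omega⟩
      exact ⟨w, by omega, Or.inr hw⟩
  have hwI : w ∉ I := fun hwI => by have := (adj_iff hk).mp (hsub hwI); omega
  have := hI w hwI p hp q hq
  rw [adj_iff hk, adj_iff hk] at this
  omega

theorem eq_univ_of_isInterval (hk1 : 2 ≤ k) (hk2 : k ≤ n - 3) {I : Set (Fin n)}
    (hI : IsInterval (doubleNeighbourGraph n k) I) (hpath : ∀ v : Fin n, (v : ℕ) < n - 1 → v ∈ I) :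
    I = Set.univ := by
  refine Set.eq_univ_of_forall fun h => ?_
  by_contra hhI
  have hh : (h : ℕ) = n - 1 := by by_contra hh; exact hhI (hpath h (by omega))
  obtain ⟨a, ha⟩ : ∃ a : Fin n, (a : ℕ) = k - 1 := ⟨⟨k - 1, by omega⟩, rfl⟩
  obtain ⟨z, hz⟩ : ∃ z : Fin n, (z : ℕ) = 0 := ⟨⟨0, by omega⟩, rfl⟩
  have := hI h hhI a (hpath a (by omega)) z (hpath z (by omega))
  rw [adj_iff (by omega), adj_iff (by omega)] at this
  omega

theorem exists_adj_iff_not_adj_last (hk1 : 2 ≤ k) (hk2 : k ≤ n - 3) {p h : Fin n}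
    (hp : (p : ℕ) < n - 1) (hh : (h : ℕ) = n - 1) :
    ∃ q : Fin n, q ≠ p ∧ (q : ℕ) < n - 1 ∧
      ((doubleNeighbourGraph n k).Adj p q ↔ ¬ (doubleNeighbourGraph n k).Adj h q) := by
  obtain ⟨m, hm, hmp, hsep⟩ : ∃ m : ℕ, m < n - 1 ∧ m ≠ p ∧
      ((m + 1 = p ∨ p + 1 = m) ↔ ¬ (m + 1 = k ∨ m = k)) := by
    by_cases h1 : (p : ℕ) = k - 1
    · exact ⟨k - 2, by omega, by omega, by omega⟩
    by_cases h2 : (p : ℕ) = k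
    · exact ⟨k + 1, by omega, by omega, by omega⟩
    by_cases h3 : (p : ℕ) = k - 2
    · exact ⟨k, by omega, by omega, by omega⟩
    · exact ⟨k - 1, by omega, by omega, by omega⟩
  obtain ⟨q, rfl⟩ : ∃ q : Fin n, (q : ℕ) = m := ⟨⟨m, by omega⟩, rfl⟩
  refine ⟨q, by omega, hm, ?_⟩
  rw [adj_iff (by omega), adj_iff (by omega)]
  omega

theorem indecomposable (hk1 : 2 ≤ k) (hk2 : k ≤ n - 3) :
    Indecomposable (doubleNeighbourGraph n k) := by
  intro I hI
  by_cases hall : ∀ v : Fin n, (v : ℕ) < n - 1 → v ∈ I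
  · exact Or.inr (Or.inl (eq_univ_of_isInterval hk1 hk2 hI hall))
  have hpath_eq : ∀ p ∈ I, ∀ q ∈ I, (p : ℕ) < n - 1 → (q : ℕ) < n - 1 → p = q :=
    fun p hp q hq hpn hqn => by_contra fun hpq => hall fun _ =>
      path_mem_of_isInterval (by omega) (by omega) hI hpq hp hq hpn hqn
  rcases I.eq_empty_or_nonempty with h | hne
  · exact Or.inl h
  rcases hne.exists_eq_singleton_or_nontrivial with h | ⟨a, ha, b, hb, hab⟩
  · exact Or.inr (Or.inr h)
  exfalso
  obtain ⟨p, hp, hpn, h, hhI, hh⟩ : ∃ p ∈ I, (p : ℕ) < n - 1 ∧ ∃ h ∈ I, (h : ℕ) = n - 1 := by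
    rcases lt_or_ge (a : ℕ) (n - 1) with ha' | ha'
    · refine ⟨a, ha, ha', b, hb, ?_⟩
      by_contra hb'
      exact hab (hpath_eq a ha b hb ha' (by omega))
    · exact ⟨b, hb, by omega, a, ha, by omega⟩
  obtain ⟨q, hqp, hqn, hsep⟩ := exists_adj_iff_not_adj_last hk1 hk2 hpn hh
  have hqI : q ∉ I := fun hqI => hqp (hpath_eq q hqI p hp hqn hpn)
  exact iff_not_self ((hI q hqI p hp h hhI).symm.trans hsep)

/-- Deleting `x` and `y` cuts the path into `[0, x)`, `(x, y)` and `(y, n - 2]`; the vertex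
`n - 1` is attached to at most two of these pieces, so the remaining graph is disconnected. -/
theorem decomposable_induce_compl_pair (hk1 : 2 ≤ k) (hk2 : k ≤ n - 3) {x y : Fin n}
    (hxy : (x : ℕ) < y) (hx0 : (x : ℕ) ≠ 0) (hx : (x : ℕ) ≠ n - 2) (hy : (y : ℕ) ≠ n - 2) :
    Decomposable ((doubleNeighbourGraph n k).induce ({x, y}ᶜ : Set (Fin n))) := by
  have hk : k + 2 ≤ n := by omega
  have hcard : 3 ≤ ({x, y}ᶜ : Set (Fin n)).ncard := by
    rw [Set.ncard_compl, Set.ncard_pair (by omega), Nat.card_eq_fintype_card, Fintype.card_fin]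
    omega
  have hmem : ∀ v : Fin n, v ∈ ({x, y}ᶜ : Set (Fin n)) ↔ (v : ℕ) ≠ x ∧ (v : ℕ) ≠ y := by
    simp [Fin.ext_iff]
  obtain ⟨z, hz⟩ : ∃ z : Fin n, (z : ℕ) = 0 := ⟨⟨0, by omega⟩, rfl⟩
  obtain ⟨h, hh⟩ : ∃ h : Fin n, (h : ℕ) = n - 1 := ⟨⟨n - 1, by omega⟩, rfl⟩
  obtain ⟨e, he⟩ : ∃ e : Fin n, (e : ℕ) = n - 2 := ⟨⟨n - 2, by omega⟩, rfl⟩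
  obtain ⟨x', hx'⟩ : ∃ x' : Fin n, (x' : ℕ) = x + 1 := ⟨⟨x + 1, by omega⟩, rfl⟩
  rcases (by omega : (y : ℕ) = n - 1 ∨ (y : ℕ) < k ∨ (x : ℕ) < k ∧ k ≤ y ∧ (y : ℕ) < n - 1 ∨
      k ≤ (x : ℕ) ∧ (y : ℕ) < n - 1) with hy' | hy' | hy' | hy'
  · refine decomposable_induce_of_forall_not_adj (I := {v : Fin n | (v : ℕ) < x}) hcard
      ⟨z, ?_, ?_⟩ ⟨x', ?_, ?_⟩ ?_ <;>
    simp only [hmem, Set.mem_ofPred_eq, adj_iff hk] <;> intros <;> omega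
  · refine decomposable_induce_of_forall_not_adj (I := {v : Fin n | (v : ℕ) < x}) hcard
      ⟨z, ?_, ?_⟩ ⟨h, ?_, ?_⟩ ?_ <;>
    simp only [hmem, Set.mem_ofPred_eq, adj_iff hk] <;> intros <;> omega
  · refine decomposable_induce_of_forall_not_adj
      (I := {v : Fin n | (v : ℕ) < x ∨ y < (v : ℕ) ∧ (v : ℕ) < n - 1}) hcard
      ⟨z, ?_, ?_⟩ ⟨h, ?_, ?_⟩ ?_ <;>
    simp only [hmem, Set.mem_ofPred_eq, adj_iff hk] <;> intros <;> omega
  · refine decomposable_induce_of_forall_not_adj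
      (I := {v : Fin n | y < (v : ℕ) ∧ (v : ℕ) < n - 1}) hcard
      ⟨e, ?_, ?_⟩ ⟨z, ?_, ?_⟩ ?_ <;>
    simp only [hmem, Set.mem_ofPred_eq, adj_iff hk] <;> intros <;> omega

end doubleNeighbourGraph

theorem eq_doubleNeighbourGraph {n k : ℕ} {G : SimpleGraph (Fin n)} (hk : k + 2 ≤ n)
    (hpath : ∀ i j : Fin n, (i : ℕ) < n - 1 → (j : ℕ) < n - 1 →
      (G.Adj i j ↔ ((i : ℕ) + 1 = (j : ℕ) ∨ (j : ℕ) + 1 = (i : ℕ))))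
    (hN : ∀ j : Fin n, G.Adj ⟨n - 1, by omega⟩ j ↔ ((j : ℕ) + 1 = k ∨ (j : ℕ) = k)) :
    G = doubleNeighbourGraph n k := by
  have hN' : ∀ h j : Fin n, (h : ℕ) = n - 1 → (G.Adj h j ↔ ((j : ℕ) + 1 = k ∨ (j : ℕ) = k)) :=
    fun h j hh => (Fin.ext hh : h = ⟨n - 1, _⟩) ▸ hN j
  ext a b
  rw [doubleNeighbourGraph.adj_iff hk]
  rcases lt_or_ge (a : ℕ) (n - 1) with ha | ha
  · rcases lt_or_ge (b : ℕ) (n - 1) with hb | hb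
    · rw [hpath a b ha hb]; omega
    · rw [G.adj_comm, hN' b a (by omega)]; omega
  · rw [hN' a b (by omega)]; omega

theorem Pminus1_double_neighbour (n k : ℕ) (hk1 : 2 ≤ k) (hk2 : k ≤ n - 3)
    (G : SimpleGraph (Fin n))
    (hpath : ∀ i j : Fin n, (i : ℕ) < n - 1 → (j : ℕ) < n - 1 →
      (G.Adj i j ↔ ((i : ℕ) + 1 = (j : ℕ) ∨ (j : ℕ) + 1 = (i : ℕ))))
    (hN : ∀ j : Fin n, G.Adj ⟨n - 1, by omega⟩ j ↔ ((j : ℕ) + 1 = k ∨ (j : ℕ) = k)) :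
    Indecomposable G ∧
    ∀ x y : Fin n, x ≠ y → (x : ℕ) ≠ 0 → (x : ℕ) ≠ n - 2 →
      (y : ℕ) ≠ 0 → (y : ℕ) ≠ n - 2 →
      Decomposable (G.induce (({x, y} : Set (Fin n))ᶜ)) := by
  obtain rfl := eq_doubleNeighbourGraph (by omega) hpath hN
  refine ⟨doubleNeighbourGraph.indecomposable hk1 hk2, fun x y hxy hx0 hx hy0 hy => ?_⟩
  rcases lt_or_gt_of_ne (Fin.val_ne_of_ne hxy) with hlt | hlt
  · exact doubleNeighbourGraph.decomposable_induce_compl_pair hk1 hk2 hlt hx0 hx hy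
  · rw [Set.pair_comm]
    exact doubleNeighbourGraph.decomposable_induce_compl_pair hk1 hk2 hlt hy0 hy hx
end
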